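/- arXiv:2410.04894 — 2 statements merged into one kernel-verified Lean document; each statement's English description precedes it below -/
import Mathlib

section
/- Let σ ∈ ℂ∖{0}, a ∈ ℂ with Re a > 0, and z ∈ ℂ∖{0} with |arg(σz)| < π. Then for every integer N ≥ 0, F⁽¹⁾(z;a;σ) = Σ_{n=0}^{N−1} Γ(a+n)·exp((a+n)(iπ − Log σ))·z^{−n−1} + z^{−N} F⁽¹⁾(z;a+N;σ), where Log denotes the principal logarithm and Γ is the Gamma function. (Exact finite expansion of the first hyperterminant with self-similar remainder; the terms exhibit the factorial-over-power divergence typical of asymptotic series with a Borel transform.) -/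
open MeasureTheory Set Filter

open scoped Classical

noncomputable section

/-- `e^{iθ}`. -/
def eI (θ : ℝ) : ℂ := Complex.exp (θ * Complex.I)

/-- First hyperterminant ray integral along the ray of direction `e^{iθ}`. -/
def F1ray (θ : ℝ) (z a σ : ℂ) : ℂ :=
  eI θ * ∫ t in Ioi (0:ℝ),
    Complex.exp (σ * t * eI θ) * (t : ℂ) ^ (a - 1) *
      Complex.exp ((a - 1) * (θ * Complex.I)) * (z - t * eI θ)⁻¹

/-- First hyperterminant `F⁽¹⁾(z;a;σ)` with its principal ray `θ = π - arg σ`. -/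
def F1 (z a σ : ℂ) : ℂ := F1ray (Real.pi - σ.arg) z a σ

/-- Second hyperterminant double ray integral, outer ray `e^{iθ₀}`, inner ray `e^{iθ₁}`. -/
def F2ray (θ0 θ1 : ℝ) (z N0 σ0 N1 σ1 : ℂ) : ℂ :=
  eI θ0 * eI θ1 * ∫ t0 in Ioi (0:ℝ), ∫ t1 in Ioi (0:ℝ),
    Complex.exp (σ0 * t0 * eI θ0 + σ1 * t1 * eI θ1) *
      ((t0 : ℂ) ^ N0 * Complex.exp (N0 * (θ0 * Complex.I))) *
      ((t1 : ℂ) ^ N1 * Complex.exp (N1 * (θ1 * Complex.I))) *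
      ((z - t0 * eI θ0) * (t0 * eI θ0 - t1 * eI θ1))⁻¹

/-- Second hyperterminant `F⁽²⁾(z;N₀+1,σ₀;N₁+1,σ₁)` with both principal rays. -/
def F2 (z N0 σ0 N1 σ1 : ℂ) : ℂ :=
  F2ray (Real.pi - σ0.arg) (Real.pi - σ1.arg) z N0 σ0 N1 σ1

/-- Winding index of the marked argument `ψ` of `σz` relative to the Stokes rays
`ψ = (2m-1)π`. -/
def wind (ψ : ℝ) : ℤ :=
  if 0 ≤ ψ then ⌈(ψ - Real.pi) / (2 * Real.pi)⌉ else -⌈(-ψ - Real.pi) / (2 * Real.pi)⌉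

/-- `ψ` lies on a Stokes ray `ψ = (2m-1)π`. -/
def isStokes (ψ : ℝ) : Prop := ∃ m : ℤ, ψ = (2 * m - 1) * Real.pi

/-- Analytic continuation of the first hyperterminant `F⁽¹⁾(z;a;σ)` to the point
`z = r e^{iφ}` carrying the marked argument `φ`: on `|arg(σz)| < π` it is the
principal ray integral; each upward crossing of a Stokes ray `arg(σz) = (2m-1)π`
adds the residue `2πi e^{σz} |z|^{a-1} e^{i(a-1)·arg z}`; on a Stokes ray it is the
limit from the side of the principal sector. -/
def F1m (a σ : ℂ) (r φ : ℝ) : ℂ :=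
  let ψ := σ.arg + φ
  let res : ℂ := 2 * Real.pi * Complex.I * Complex.exp (σ * ((r : ℂ) * eI φ)) *
      (r : ℂ) ^ (a - 1) * Complex.exp ((a - 1) * (φ * Complex.I))
  if isStokes ψ then
    (if 0 ≤ ψ then limUnder (nhdsWithin φ (Iio φ)) (fun χ => F1 ((r : ℂ) * eI χ) a σ)
     else limUnder (nhdsWithin φ (Ioi φ)) (fun χ => F1 ((r : ℂ) * eI χ) a σ)) + (wind ψ : ℂ) * res
  else F1 ((r : ℂ) * eI φ) a σ + (wind ψ : ℂ) * res

/-- Second hyperterminant extended to `η = arg σ₁ - arg σ₀ ∈ (-π, 0]`: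
for `η < 0` one subtracts `2πi F⁽¹⁾`-type term, for `η = 0` it is the limit
`F⁽²⁾(z;N₀+1,σ₀e^{-iε};N₁+1,σ₁)` as `ε → 0⁺`. -/
def F2ext (z N0 σ0 N1 σ1 : ℂ) : ℂ :=
  if σ0.arg < σ1.arg then F2 z N0 σ0 N1 σ1
  else if σ1.arg = σ0.arg then
    limUnder (nhdsWithin (0:ℝ) (Ioi 0)) (fun ε => F2 z N0 (σ0 * eI (-ε)) N1 σ1)
  else if σ0.arg - σ1.arg < Real.pi then
    F2 z N0 σ0 N1 σ1 -
      2 * Real.pi * Complex.I * F1ray (Real.pi - σ0.arg) z (N0 + N1 + 1) (σ0 + σ1)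
  else F2 z N0 σ0 N1 σ1

/-- Second hyperterminant at `z = r e^{iφ}` carrying the marked argument `φ`,
continued across the Stokes ray `arg(σ₀z) = π` by adding
`2πi e^{σ₀z} |z|^{N₀} e^{iN₀ arg z} F⁽¹⁾(z;N₁+1;σ₁)`, with the value on the ray
taken as the limit from below. -/
def F2m (N0 σ0 N1 σ1 : ℂ) (r φ : ℝ) : ℂ :=
  let ψ := σ0.arg + φ
  if ψ < Real.pi then F2ext ((r : ℂ) * eI φ) N0 σ0 N1 σ1
  else if ψ = Real.pi then
    limUnder (nhdsWithin φ (Iio φ)) (fun χ => F2ext ((r : ℂ) * eI χ) N0 σ0 N1 σ1)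
  else
    F2ext ((r : ℂ) * eI φ) N0 σ0 N1 σ1 +
      2 * Real.pi * Complex.I * Complex.exp (σ0 * ((r : ℂ) * eI φ)) *
        (r : ℂ) ^ N0 * Complex.exp (N0 * (φ * Complex.I)) * F1m (N1 + 1) σ1 r φ

/-- Complementary error function on `ℂ`: `erfc w = (2/√π) ∫₀^∞ e^{-(w+t)²} dt`. -/
def cerfc (w : ℂ) : ℂ :=
  (2 : ℂ) / (Real.sqrt Real.pi : ℂ) * ∫ t in Ioi (0:ℝ), Complex.exp (-(w + t) ^ 2)

/-- Error function `erf w = 1 - erfc w`. -/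
def cerf (w : ℂ) : ℂ := 1 - cerfc w

/-- The new smoothing special function
`erfc(x;y;λ) = (2/√π) ∫₀^∞ e^{-(x+s-y)²} erfc(λ(x+s)) ds`. -/
def cerfc3 (x y lam : ℂ) : ℂ :=
  (2 : ℂ) / (Real.sqrt Real.pi : ℂ) *
    ∫ s in Ioi (0:ℝ), Complex.exp (-(x + s - y) ^ 2) * cerfc (lam * (x + s))

/-- `I(β) = ∫₀^∞ s^{N₁} (1+s)^{-N₀-N₁-1} (s-β)⁻¹ ds`. -/
def Ifun (N0 N1 β : ℂ) : ℂ :=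
  ∫ s in Ioi (0:ℝ), (s : ℂ) ^ N1 * ((1 : ℂ) + s) ^ (-N0 - N1 - 1) * ((s : ℂ) - β)⁻¹

/-- `Ĩ(β)`: equals `I(β)` for `arg β ∈ (0,π]`, the limit of `I(βe^{iθ})` as `θ → 0⁺`
for `β ∈ (0,∞)`, and `I(β) + 2πi β^{N₁}(1+β)^{-N₀-N₁-1}` for `arg β ∈ (-π,0)`. -/
def Itilde (N0 N1 β : ℂ) : ℂ :=
  if 0 < β.arg then Ifun N0 N1 β
  else if β.arg = 0 then limUnder (nhdsWithin (0:ℝ) (Ioi 0)) (fun θ => Ifun N0 N1 (β * eI θ))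
  else Ifun N0 N1 β + 2 * Real.pi * Complex.I * β ^ N1 * (1 + β) ^ (-N0 - N1 - 1)

/-- The sector `|arg(-σz/N)| < 2π` in the logarithmic coordinate `w = log z`
(so `z = e^w` with marked argument `Im w`). -/
def alphaSector (σ N : ℂ) : Set ℂ :=
  {w : ℂ | |σ.arg + w.im - N.arg - Real.pi| < 2 * Real.pi}

/-- The logarithmic coordinate of the centre `z = -N/σ` (marked so that
`arg(-σz/N) = 0`). -/
def wcenter (σ N : ℂ) : ℂ :=
  (Real.log (‖N‖ / ‖σ‖) : ℂ) + (Real.pi + N.arg - σ.arg) * Complex.I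

/-- The continuous branch of `log(-σz/N)` vanishing at `z = -N/σ`, in the
logarithmic coordinate `w = log z`. -/
def ellC (σ N : ℂ) (w : ℂ) : ℂ :=
  w + (Real.log (‖σ‖ / ‖N‖) : ℂ) + (σ.arg - N.arg - Real.pi) * Complex.I

/-- `A` is the function `α_{σ,N}` (in the logarithmic coordinate `w = log z`):
analytic on the sector, `(1/2)α² = 1 + σz/N + ℓ(z)`, `α(-N/σ) = 0` and
`α'(-N/σ) = -iσ/N`, i.e. `dA/dw = i` at the centre. -/
def IsAlpha (σ N : ℂ) (A : ℂ → ℂ) : Prop :=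
  DifferentiableOn ℂ A (alphaSector σ N) ∧
  (∀ w ∈ alphaSector σ N, (A w) ^ 2 = 2 * (1 + σ * Complex.exp w / N + ellC σ N w)) ∧
  A (wcenter σ N) = 0 ∧ HasDerivAt A Complex.I (wcenter σ N)

/-- `g_{σ,N}(z) = i(1+σz/N)⁻¹ - α_{σ,N}(z)⁻¹`, extended by its analytic value
`i/3` at the centre `z = -N/σ`; logarithmic coordinate `w = log z`. -/
def gfun (σ N : ℂ) (A : ℂ → ℂ) (w : ℂ) : ℂ :=
  if w = wcenter σ N then Complex.I / 3
  else Complex.I / (1 + σ * Complex.exp w / N) - (A w)⁻¹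

/-- Logarithmic coordinate of the marked point `z = r e^{iφ}`. -/
def wpt (r φ : ℝ) : ℂ := (Real.log r : ℂ) + φ * Complex.I

/-- Principal square root. -/
def sqrtC (w : ℂ) : ℂ := w ^ ((1 : ℂ) / 2)

/-- Principal branch of the complex arctangent. -/
def arctanC (z : ℂ) : ℂ :=
  Complex.I / 2 * (Complex.log (1 - Complex.I * z) - Complex.log (1 + Complex.I * z))

/-- Logarithmic coordinate of `ζ₁ = -N₁/σ₁` with marked argument
`arg(σ₀ζ₁) = π + arg(σ₀N₁/(σ₁N₀))`. -/
def wzeta (σ0 σ1 N0 N1 : ℂ) : ℂ :=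
  (Real.log (‖N1‖ / ‖σ1‖) : ℂ) +
    (Real.pi + (σ0 * N1 / (σ1 * N0)).arg - σ0.arg) * Complex.I

/-- `d₁ = i α₀(ζ₁)/(1 - σ₀N₁/(σ₁N₀))`, extended by `1` when `σ₀N₁ = σ₁N₀`. -/
def d1c (σ0 σ1 N0 N1 : ℂ) (A0 : ℂ → ℂ) : ℂ :=
  if σ0 * N1 = σ1 * N0 then 1
  else Complex.I * A0 (wzeta σ0 σ1 N0 N1) / (1 - σ0 * N1 / (σ1 * N0))

/-- `G` is the function `γ` of Theorem `hypergeom` for `s* = N₁/N₀`: analytic on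
`|arg β| < π` with `(1/2)γ(β)² = (1+1/s*) log((1+s*)/(1+β)) - log(s*/β)`,
`γ(s*) = 0` and `γ(s*e^{iν}) ∼ ν (1+s*)^{-1/2}` as `ν → 0`. -/
def IsGamma (N0 N1 : ℂ) (G : ℂ → ℂ) : Prop :=
  DifferentiableOn ℂ G {β : ℂ | β ≠ 0 ∧ |β.arg| < Real.pi} ∧
  (∀ β ∈ {β : ℂ | β ≠ 0 ∧ |β.arg| < Real.pi},
    (G β) ^ 2 =
      2 * ((1 + N0 / N1) * Complex.log ((1 + N1 / N0) / (1 + β)) -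
        Complex.log (N1 / N0 / β))) ∧
  G (N1 / N0) = 0 ∧
  HasDerivAt G ((1 + N1 / N0) ^ (-(1 : ℂ) / 2) / (Complex.I * (N1 / N0))) (N1 / N0)

/-- `g(0,β) = (1+s*)^{-1/2}(1-β/s*)⁻¹ - i((1+β)γ(β))⁻¹`, with its removable
singularity at `β = s* = N₁/N₀` filled in. -/
def gzero (N0 N1 : ℂ) (G : ℂ → ℂ) (β : ℂ) : ℂ :=
  if β = N1 / N0 then (1 - N1 / N0) / (3 * (1 + N1 / N0) ^ ((3 : ℂ) / 2))
  else (1 + N1 / N0) ^ (-(1 : ℂ) / 2) * (1 - β / (N1 / N0))⁻¹ -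
    Complex.I / ((1 + β) * G β)

/-- The coefficients `bₙ(y,λ)` of the large-`x` asymptotic expansion of
`erfc(x;y;λ)`: `b₀ = b₁ = 0` (`b₋₁ = 0`), `b₂ = 1/(πλ(λ²+1))` and
`4λ²(λ²+1) b_{m+2} = 4yλ² b_{m+1} - 2((2m-1)(λ²+1) - m) b_m + 2y(m-1) b_{m-1}
- (m-1)(m-2) b_{m-2}` for `m ≥ 1`. -/
def bc (y l : ℂ) : ℕ → ℂ
  | 0 => 0
  | 1 => 0
  | 2 => 1 / (Real.pi * l * (l ^ 2 + 1))
  | 3 =>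
      (4 * y * l ^ 2 * bc y l 2 - 2 * ((2 * 1 - 1) * (l ^ 2 + 1) - 1) * bc y l 1 +
          2 * y * (1 - 1 : ℂ) * bc y l 0 - (1 - 1 : ℂ) * (1 - 2 : ℂ) * 0) /
        (4 * l ^ 2 * (l ^ 2 + 1))
  | (n + 4) =>
      (4 * y * l ^ 2 * bc y l (n + 3) -
          2 * ((2 * ((n : ℂ) + 2) - 1) * (l ^ 2 + 1) - ((n : ℂ) + 2)) * bc y l (n + 2) +
          2 * y * ((n : ℂ) + 1) * bc y l (n + 1) -
          ((n : ℂ) + 1) * (n : ℂ) * bc y l n) /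
        (4 * l ^ 2 * (l ^ 2 + 1))

/-- The slit sector `{z ≠ 0 : |arg(σz)| < π}`. -/
def sector1 (σ : ℂ) : Set ℂ := {z : ℂ | z ≠ 0 ∧ |(σ * z).arg| < Real.pi}

/-- The `erfc(x;y;λ)`-term appearing in the uniform higher-order Stokes smoothing. -/
def X9 (σ0 σ1 N0 N1 : ℂ) (A0 : ℂ → ℂ) (r φ : ℝ) : ℂ :=
  cerfc3 (d1c σ0 σ1 N0 N1 A0 * A0 (wpt r φ) * sqrtC (N1 / 2))
    (d1c σ0 σ1 N0 N1 A0 * A0 (wzeta σ0 σ1 N0 N1) * sqrtC (N1 / 2))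
    ((d1c σ0 σ1 N0 N1 A0)⁻¹ * sqrtC (N0 / N1))

/-! On its ray `w = t e^{iθ}`, `θ = π - arg σ`, the integrand of `F⁽¹⁾(z;a;σ)` is
`e^{-|σ|t} t^{a-1} e^{i(a-1)θ} / (z - w)`. The partial fraction
`1/(z - w) = 1/z + w/(z(z - w))` splits it into a Gamma integral, worth
`Γ(a) |σ|^{-a} e^{iaθ} / z = Γ(a) e^{a(iπ - Log σ)} / z`, plus `1/z` times the integrand of
`F⁽¹⁾(z;a+1;σ)`. Both pieces are integrable because `|arg(σz)| < π` keeps `z` at a positive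
distance from the ray. Iterating this one-step recurrence `N` times gives the expansion. -/

open Complex

lemma mul_eI_pi_sub_arg (σ : ℂ) : σ * eI (Real.pi - σ.arg) = -(‖σ‖ : ℂ) := by
  rw [eI, ofReal_sub, sub_mul, exp_sub, exp_pi_mul_I]
  nth_rewrite 1 [← norm_mul_exp_arg_mul_I σ]
  field_simp [exp_ne_zero]

lemma exists_pos_le_norm_add_ofReal_of_mem_slitPlane {w : ℂ} (hw : w ∈ slitPlane) :
    ∃ ε > 0, ∀ s : ℝ, 0 ≤ s → ε ≤ ‖w + s‖ := by
  obtain ⟨ε, hε, hball⟩ := Metric.isOpen_iff.mp isOpen_slitPlane w hw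
  refine ⟨ε, hε, fun s hs => not_lt.mp fun hlt => ?_⟩
  have hmem : -(s : ℂ) ∈ slitPlane := hball (by
    rwa [Metric.mem_ball, dist_eq_norm, ← norm_neg, neg_sub, sub_neg_eq_add])
  exact (neg_ofReal_mem_slitPlane.mp hmem).not_ge hs

lemma exists_pos_le_norm_sub_ofReal_mul_eI {σ z : ℂ} (hσz : σ * z ∈ slitPlane) :
    ∃ d > 0, ∀ t : ℝ, 0 ≤ t → d ≤ ‖z - t * eI (Real.pi - σ.arg)‖ := by
  have hσ : 0 < ‖σ‖ := norm_pos_iff.mpr (left_ne_zero_of_mul (slitPlane_ne_zero hσz))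
  obtain ⟨ε, hε, hbound⟩ := exists_pos_le_norm_add_ofReal_of_mem_slitPlane hσz
  refine ⟨ε / ‖σ‖, div_pos hε hσ, fun t ht => (div_le_iff₀' hσ).mpr ?_⟩
  calc ε ≤ ‖σ * z + ((‖σ‖ * t : ℝ) : ℂ)‖ := hbound _ (by positivity)
    _ = ‖σ * (z - t * eI (Real.pi - σ.arg))‖ := by
        rw [mul_sub, mul_left_comm, mul_eI_pi_sub_arg]; push_cast; ring_nf
    _ = ‖σ‖ * ‖z - t * eI (Real.pi - σ.arg)‖ := norm_mul _ _

lemma F1_eq_integral (z a σ : ℂ) :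
    F1 z a σ = exp (a * ((Real.pi - σ.arg : ℝ) * I)) *
      ∫ t in Ioi (0 : ℝ), (t : ℂ) ^ (a - 1) * exp (-(‖σ‖ * t)) *
        (z - t * eI (Real.pi - σ.arg))⁻¹ := by
  have hexp : ∀ t : ℝ, exp (σ * t * eI (Real.pi - σ.arg)) = exp (-(‖σ‖ * t)) := fun t => by
    rw [mul_right_comm, mul_eI_pi_sub_arg, neg_mul]
  rw [F1, F1ray, ← integral_const_mul, ← integral_const_mul]
  congr 1 with t
  rw [hexp, eI, show a * ((Real.pi - σ.arg : ℝ) * I) = ((Real.pi - σ.arg : ℝ) * I) +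
    (a - 1) * ((Real.pi - σ.arg : ℝ) * I) by ring, exp_add]
  ring

lemma integrableOn_cpow_mul_exp_neg_mul_Ioi {a : ℂ} {r : ℝ} (ha : 0 < a.re) (hr : 0 < r) :
    IntegrableOn (fun t : ℝ => (t : ℂ) ^ (a - 1) * exp (-(r * t))) (Ioi 0) := by
  -- the Bochner integral of a non-integrable function is `0`, and this one is `(1/r)^a Γ(a) ≠ 0`
  refine Integrable.of_integral_ne_zero ?_
  rw [integral_cpow_mul_exp_neg_mul_Ioi ha hr]
  exact mul_ne_zero (cpow_ne_zero_iff.mpr (Or.inl (by simp [hr.ne'])))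
    (Gamma_ne_zero_of_re_pos ha)

lemma integrableOn_F1_integrand {σ z a : ℂ} (hσz : σ * z ∈ slitPlane) (ha : 0 < a.re) :
    IntegrableOn (fun t : ℝ => (t : ℂ) ^ (a - 1) * exp (-(‖σ‖ * t)) *
      (z - t * eI (Real.pi - σ.arg))⁻¹) (Ioi 0) := by
  obtain ⟨d, hd, hdist⟩ := exists_pos_le_norm_sub_ofReal_mul_eI hσz
  have hσ : 0 < ‖σ‖ := norm_pos_iff.mpr (left_ne_zero_of_mul (slitPlane_ne_zero hσz))
  refine (integrableOn_cpow_mul_exp_neg_mul_Ioi ha hσ).mul_bdd (c := d⁻¹)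
    (by unfold eI; fun_prop) ?_
  filter_upwards [self_mem_ae_restrict measurableSet_Ioi] with t ht
  rw [norm_inv]
  exact inv_anti₀ hd (hdist t (le_of_lt ht))

lemma exp_mul_pi_sub_arg_mul_one_div_norm_cpow {σ : ℂ} (hσ : σ ≠ 0) (a : ℂ) :
    exp (a * ((Real.pi - σ.arg : ℝ) * I)) * (1 / (‖σ‖ : ℂ)) ^ a =
      exp (a * (Real.pi * I - log σ)) := by
  have hr : 0 < ‖σ‖ := norm_pos_iff.mpr hσ
  rw [cpow_def_of_ne_zero (by simp [hr.ne']), ← exp_add, one_div, ← ofReal_inv,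
    ← ofReal_log (inv_nonneg.mpr hr.le), Real.log_inv, log]
  congr 1
  push_cast
  ring

theorem F1_eq_Gamma_mul_add_inv_mul_F1_add_one {σ z a : ℂ} (hσz : σ * z ∈ slitPlane)
    (ha : 0 < a.re) :
    F1 z a σ = Gamma a * exp (a * (Real.pi * I - log σ)) * z⁻¹ + z⁻¹ * F1 z (a + 1) σ := by
  set θ : ℝ := Real.pi - σ.arg
  have hσ : σ ≠ 0 := left_ne_zero_of_mul (slitPlane_ne_zero hσz)
  have hz : z ≠ 0 := right_ne_zero_of_mul (slitPlane_ne_zero hσz)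
  obtain ⟨d, hd, hdist⟩ := exists_pos_le_norm_sub_ofReal_mul_eI hσz
  have hsplit : ∀ t ∈ Ioi (0 : ℝ),
      (t : ℂ) ^ (a - 1) * exp (-(‖σ‖ * t)) * (z - t * eI θ)⁻¹ =
        (t : ℂ) ^ (a - 1) * exp (-(‖σ‖ * t)) * z⁻¹ +
          z⁻¹ * eI θ * ((t : ℂ) ^ (a + 1 - 1) * exp (-(‖σ‖ * t)) * (z - t * eI θ)⁻¹) := by
    intro t ht
    have hne : z - t * eI θ ≠ 0 := norm_pos_iff.mp (hd.trans_le (hdist t (le_of_lt ht)))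
    have hpow : (t : ℂ) ^ a = (t : ℂ) ^ (a - 1) * t := by
      simpa using cpow_add (a - 1) 1 (ofReal_ne_zero.mpr (ne_of_gt ht))
    rw [add_sub_cancel_right, hpow]
    field_simp
    ring
  have hexp_succ : exp ((a + 1) * (θ * I)) = exp (a * (θ * I)) * eI θ := by
    rw [eI, ← exp_add]; ring_nf
  rw [F1_eq_integral, F1_eq_integral, setIntegral_congr_fun measurableSet_Ioi hsplit,
    integral_add ((integrableOn_cpow_mul_exp_neg_mul_Ioi ha (norm_pos_iff.mpr hσ)).mul_const _)
      ((integrableOn_F1_integrand hσz (by rw [add_re, one_re]; linarith)).const_mul _),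
    integral_mul_const, integral_const_mul, integral_cpow_mul_exp_neg_mul_Ioi ha
      (norm_pos_iff.mpr hσ), ← exp_mul_pi_sub_arg_mul_one_div_norm_cpow hσ, hexp_succ]
  ring

theorem stmt0 (σ a z : ℂ) (hσ : σ ≠ 0) (ha : 0 < a.re) (hz : z ≠ 0)
    (harg : |(σ * z).arg| < Real.pi) (N : ℕ) :
    F1 z a σ =
      (∑ n ∈ Finset.range N,
        Complex.Gamma (a + n) *
          Complex.exp ((a + n) * (Real.pi * Complex.I - Complex.log σ)) *
          z ^ (-(n : ℤ) - 1)) +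
        z ^ (-(N : ℤ)) * F1 z (a + N) σ := by
  have hσz : σ * z ∈ slitPlane :=
    mem_slitPlane_iff_arg.mpr ⟨(abs_lt.mp harg).2.ne, mul_ne_zero hσ hz⟩
  induction N with
  | zero => simp
  | succ N ih =>
    have hre : 0 < (a + N).re := by simpa using add_pos_of_pos_of_nonneg ha N.cast_nonneg
    rw [Finset.sum_range_succ, ih, F1_eq_Gamma_mul_add_inv_mul_F1_add_one hσz hre]
    push_cast
    rw [← add_assoc, show -((N : ℤ) + 1) = -(N : ℤ) - 1 by ring, zpow_sub_one₀ hz]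
    ring
end
end

section
/- For all x, y ∈ ℂ: erfc(x; y; 0) = erfc(x − y) and erfc(x; 0; 1) = (1/2)·erfc(x)²; and for every λ ∈ ℝ: erfc(0; 0; λ) = 1 − (2/π)·arctan λ. (Special values of the new smoothing special function; the last identity gives the higher-order Stokes multiplier at the crossing point.) -/
open MeasureTheory Set Filter

open scoped Classical

noncomputable section

/-!
Write `T(s) = ∫_s^∞ f` for the tail integral of an integrable continuous `f`, so that `T' = -f`.
By a real shift, `erfc(x + s) = (2/√π) T(s)` for `f(u) = e^{-(x+u)²}`. Hence `erfc(x;y;0)` is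
`erfc(x - y)` because `erfc 0 = 1`, and `erfc(x;0;1) = (4/π) ∫_0^∞ f T = (2/π) T(0)²`, since
`-2 f T` is the derivative of `T²`, which vanishes at infinity.

For the last identity take the Gaussian tail `T(s) = ∫_s^∞ e^{-u²}` and
`K(t) = ∫_0^∞ T(ts) e^{-s²} ds`. Differentiating under the integral sign,
`K'(t) = -∫_0^∞ s e^{-(1+t²)s²} ds = -1/(2(1+t²))`, and `K(0) = T(0)² = π/4`;
so `K(t) = π/4 - arctan(t)/2`, while `erfc(0;0;λ) = (4/π) K(λ)`.
-/

open Topology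

section TailIntegral

variable {E : Type*} [NormedAddCommGroup E] [NormedSpace ℝ E] {f : ℝ → E}

theorem integral_Ioi_comp_add_right (f : ℝ → E) (s : ℝ) :
    ∫ t in Ioi 0, f (t + s) = ∫ u in Ioi s, f u := by
  have h := (measurePreserving_add_right volume s).setIntegral_preimage_emb
    (measurableEmbedding_addRight s) f (Ioi s)
  rwa [preimage_add_const_Ioi, sub_self] at h

theorem norm_integral_Ioi_le (hf : Integrable f) (s : ℝ) :
    ‖∫ u in Ioi s, f u‖ ≤ ∫ u, ‖f u‖ :=
  (norm_integral_le_integral_norm _).trans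
    (setIntegral_le_integral hf.norm (.of_forall fun _ => norm_nonneg _))

theorem hasDerivAt_integral_Ioi [CompleteSpace E] (hf : Integrable f) (hc : Continuous f)
    (s : ℝ) : HasDerivAt (fun s => ∫ u in Ioi s, f u) (-f s) s := by
  have hsplit : (fun s => ∫ u in Ioi s, f u) =
      fun s => (∫ u in Ioi 0, f u) - ∫ u in (0 : ℝ)..s, f u :=
    funext fun s => eq_sub_of_add_eq'
      (intervalIntegral.integral_interval_add_Ioi hf.integrableOn hf.integrableOn)
  rw [hsplit]
  exact (hc.integral_hasStrictDerivAt 0 s).hasDerivAt.const_sub _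

end TailIntegral

theorem integral_Ioi_mul_integral_Ioi {𝕜 : Type*} [RCLike 𝕜] {f : ℝ → 𝕜}
    (hf : Integrable f) (hc : Continuous f) (a : ℝ) :
    ∫ s in Ioi a, f s * ∫ u in Ioi s, f u = (∫ u in Ioi a, f u) ^ 2 / 2 := by
  set T : ℝ → 𝕜 := fun s => ∫ u in Ioi s, f u
  have hT : ∀ s, HasDerivAt T (-f s) s := hasDerivAt_integral_Ioi hf hc
  have hsq : ∀ s ∈ Ici a, HasDerivAt (fun s => T s ^ 2) (-2 * (f s * T s)) s := fun s _ => by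
    convert (hT s).fun_pow 2 using 1
    push_cast
    ring
  have hint : IntegrableOn (fun s => -2 * (f s * T s)) (Ioi a) :=
    (hf.mul_bdd (continuous_iff_continuousAt.2 fun s => (hT s).continuousAt).aestronglyMeasurable
      (.of_forall (norm_integral_Ioi_le hf))).integrableOn.const_mul _
  have hlim : Tendsto (fun s => T s ^ 2) atTop (𝓝 0) := by
    simpa using (tendsto_integral_Ioi_zero (f := f) (μ := volume) tendsto_id).pow 2
  have hFTC := integral_Ioi_of_hasDerivAt_of_tendsto' hsq hint hlim
  rw [integral_const_mul] at hFTC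
  linear_combination hFTC / (-2)

theorem integral_Ioi_mul_exp_neg_mul_sq {b : ℝ} (hb : 0 < b) :
    ∫ r in Ioi (0 : ℝ), r * Real.exp (-b * r ^ 2) = (2 * b)⁻¹ := by
  have h := integral_mul_cexp_neg_mul_sq (b := (b : ℂ)) (by simpa using hb)
  apply Complex.ofReal_injective
  rw [← integral_complex_ofReal]
  push_cast
  exact h

def gaussianTail (s : ℝ) : ℝ := ∫ u in Ioi s, Real.exp (-u ^ 2)

theorem integrable_exp_neg_sq : Integrable fun u : ℝ => Real.exp (-u ^ 2) := by
  simpa using integrable_exp_neg_mul_sq one_pos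

theorem gaussianTail_zero : gaussianTail 0 = Real.sqrt Real.pi / 2 := by
  simpa [gaussianTail] using integral_gaussian_Ioi 1

theorem hasDerivAt_gaussianTail (s : ℝ) : HasDerivAt gaussianTail (-Real.exp (-s ^ 2)) s :=
  hasDerivAt_integral_Ioi integrable_exp_neg_sq (by fun_prop) s

@[fun_prop]
theorem continuous_gaussianTail : Continuous gaussianTail :=
  continuous_iff_continuousAt.2 fun s => (hasDerivAt_gaussianTail s).continuousAt

theorem hasDerivAt_integral_gaussianTail_mul_exp (t : ℝ) :
    HasDerivAt (fun t => ∫ s in Ioi (0 : ℝ), gaussianTail (t * s) * Real.exp (-s ^ 2))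
      (-(2 * (1 + t ^ 2))⁻¹) t := by
  have hdiff : ∀ s r : ℝ, HasDerivAt (fun r => gaussianTail (r * s) * Real.exp (-s ^ 2))
      (-Real.exp (-(r * s) ^ 2) * s * Real.exp (-s ^ 2)) r := fun s r =>
    ((hasDerivAt_gaussianTail (r * s)).comp r (hasDerivAt_mul_const s)).mul_const _
  have hbound : ∀ s r : ℝ, ‖-Real.exp (-(r * s) ^ 2) * s * Real.exp (-s ^ 2)‖ ≤
      ‖s * Real.exp (-1 * s ^ 2)‖ := fun s r => by
    have h : Real.exp (-(r * s) ^ 2) ≤ 1 := Real.exp_le_one_iff.2 (by nlinarith)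
    simp only [norm_mul, norm_neg, Real.norm_eq_abs, Real.abs_exp, neg_one_mul]
    gcongr
    nlinarith [abs_nonneg s]
  have hint : IntegrableOn (fun s => gaussianTail (t * s) * Real.exp (-s ^ 2)) (Ioi 0) :=
    (integrable_exp_neg_sq.bdd_mul
      (by fun_prop : Continuous fun s => gaussianTail (t * s)).aestronglyMeasurable
      (.of_forall fun s => norm_integral_Ioi_le integrable_exp_neg_sq (t * s))).integrableOn
  have hvalue : ∫ s in Ioi (0 : ℝ), -Real.exp (-(t * s) ^ 2) * s * Real.exp (-s ^ 2) =
      -(2 * (1 + t ^ 2))⁻¹ := by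
    rw [← integral_Ioi_mul_exp_neg_mul_sq (by positivity : (0 : ℝ) < 1 + t ^ 2),
      ← integral_neg]
    congr with s
    rw [show -(1 + t ^ 2) * s ^ 2 = -(t * s) ^ 2 + -s ^ 2 by ring, Real.exp_add]
    ring
  have h := hasDerivAt_integral_of_dominated_loc_of_deriv_le (μ := volume.restrict (Ioi 0))
    (F := fun r s => gaussianTail (r * s) * Real.exp (-s ^ 2)) (x₀ := t) univ_mem
    (.of_forall fun r => Continuous.aestronglyMeasurable (by fun_prop))
    hint (Continuous.aestronglyMeasurable (by fun_prop)) (.of_forall fun s r _ => hbound s r)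
    (integrable_mul_exp_neg_mul_sq one_pos).norm.integrableOn
    (.of_forall fun s r _ => hdiff s r)
  rw [hvalue] at h
  exact h.2

theorem integral_gaussianTail_mul_exp (t : ℝ) :
    ∫ s in Ioi (0 : ℝ), gaussianTail (t * s) * Real.exp (-s ^ 2) =
      Real.pi / 4 - Real.arctan t / 2 := by
  set K := fun t : ℝ => ∫ s in Ioi (0 : ℝ), gaussianTail (t * s) * Real.exp (-s ^ 2)
  have hderiv : ∀ r, HasDerivAt (fun r => K r + Real.arctan r / 2) 0 r := fun r =>
    ((hasDerivAt_integral_gaussianTail_mul_exp r).add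
      ((Real.hasDerivAt_arctan r).div_const 2)).congr_deriv (by field_simp; ring)
  have hconst := is_const_of_deriv_eq_zero (fun r => (hderiv r).differentiableAt)
    (fun r => (hderiv r).deriv) t 0
  have hK0 : K 0 = Real.pi / 4 := by
    simp only [K, zero_mul, integral_const_mul]
    change gaussianTail 0 * gaussianTail 0 = _
    rw [gaussianTail_zero, div_mul_div_comm, Real.mul_self_sqrt Real.pi_pos.le]
    ring
  simp only [Real.arctan_zero, zero_div, add_zero, hK0] at hconst
  linarith

theorem integrable_cexp_neg_add_sq (x : ℂ) :
    Integrable fun u : ℝ => Complex.exp (-(x + u) ^ 2) := by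
  convert integrable_cexp_quadratic (b := 1) (by simp) (-2 * x) (-x ^ 2) using 2 with u
  ring_nf

theorem cerfc_add_ofReal (x : ℂ) (s : ℝ) :
    cerfc (x + s) = 2 / (Real.sqrt Real.pi : ℂ) * ∫ u in Ioi s, Complex.exp (-(x + u) ^ 2) := by
  rw [cerfc, ← integral_Ioi_comp_add_right (fun u : ℝ => Complex.exp (-(x + u) ^ 2)) s]
  congr 2 with t
  push_cast
  ring_nf

theorem cerfc_ofReal (r : ℝ) :
    cerfc r = ((2 / Real.sqrt Real.pi * gaussianTail r : ℝ) : ℂ) := by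
  simpa [gaussianTail, ← integral_complex_ofReal] using cerfc_add_ofReal 0 r

theorem cerfc_zero : cerfc 0 = 1 := by
  have hpi : Real.sqrt Real.pi ≠ 0 := (Real.sqrt_pos.2 Real.pi_pos).ne'
  have h := cerfc_ofReal 0
  rw [Complex.ofReal_zero, gaussianTail_zero] at h
  rw [h, div_mul_div_cancel₀ hpi]
  norm_num

theorem cerfc3_lam_zero (x y : ℂ) : cerfc3 x y 0 = cerfc (x - y) := by
  simp only [cerfc3, zero_mul, cerfc_zero, mul_one]
  rw [cerfc]
  congr 2 with s
  ring_nf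

theorem cerfc3_zero_one (x : ℂ) : cerfc3 x 0 1 = (1 / 2 : ℂ) * (cerfc x) ^ 2 := by
  have h := integral_Ioi_mul_integral_Ioi (integrable_cexp_neg_add_sq x) (by fun_prop) 0
  simp only [cerfc3, sub_zero, one_mul, cerfc_add_ofReal, mul_left_comm _ (2 / _ : ℂ),
    integral_const_mul, h]
  rw [cerfc]
  ring

theorem cerfc3_zero_zero_ofReal (lam : ℝ) :
    cerfc3 0 0 (lam : ℂ) = (1 : ℂ) - 2 / (Real.pi : ℂ) * (Real.arctan lam : ℂ) := by
  have hintegrand : ∀ s : ℝ, Complex.exp (-(0 + (s : ℂ) - 0) ^ 2) * cerfc (lam * (0 + s)) =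
      ((2 / Real.sqrt Real.pi * (gaussianTail (lam * s) * Real.exp (-s ^ 2)) : ℝ) : ℂ) :=
    fun s => by
      rw [zero_add, ← Complex.ofReal_mul, cerfc_ofReal]
      push_cast
      ring_nf
  have hpi : (Real.sqrt Real.pi : ℂ) ^ 2 = Real.pi := by
    rw [← Complex.ofReal_pow, Real.sq_sqrt Real.pi_pos.le]
  have hpi0 : (Real.pi : ℂ) ≠ 0 := Complex.ofReal_ne_zero.2 Real.pi_ne_zero
  simp only [cerfc3, hintegrand, integral_complex_ofReal, integral_const_mul,
    integral_gaussianTail_mul_exp]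
  push_cast
  field_simp
  rw [hpi]
  ring

theorem stmt16 :
    (∀ x y : ℂ, cerfc3 x y 0 = cerfc (x - y)) ∧
    (∀ x : ℂ, cerfc3 x 0 1 = (1 / 2 : ℂ) * (cerfc x) ^ 2) ∧
    (∀ lam : ℝ, cerfc3 0 0 (lam : ℂ) =
      (1 : ℂ) - 2 / (Real.pi : ℂ) * (Real.arctan lam : ℂ)) :=
  ⟨cerfc3_lam_zero, cerfc3_zero_one, cerfc3_zero_zero_ofReal⟩
end
end
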